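/- arXiv:2412.01640 — 7 statements merged into one kernel-verified Lean document; each statement's English description precedes it below -/
import Mathlib

section
/- In the polynomial ring ℤ[1/3][a₁, a₃, s, t], let b₁ = a₁ + 2s and b₃ = a₃ + (1/3)a₁s² + (1/3)a₁²s + 2t, and let r₁ = s⁴ − 6st + a₁s³ − 3a₁t − 3a₃s. Then b₁⁴ − 24·b₁·b₃ = (a₁⁴ − 24·a₁·a₃) + 16·r₁. In particular, the modular form c₄ = a₁⁴ − 24a₁a₃ is invariant under the right unit η_R of the 2-primary cubic Hopf algebroid modulo the relation ideal. -/
open MvPolynomial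

/-- The `u`-terms of `b₃` enter only through `24 u = 8 · (3 u) = 8`. -/
theorem c4_rightUnit_eq {A : Type*} [CommRing A] {u : A} (hu : 3 * u = 1) (a1 a3 s t : A) :
    (a1 + 2 * s) ^ 4 - 24 * (a1 + 2 * s) * (a3 + u * a1 * s ^ 2 + u * a1 ^ 2 * s + 2 * t) =
      (a1 ^ 4 - 24 * a1 * a3) + 16 * (s ^ 4 - 6 * s * t + a1 * s ^ 3 - 3 * a1 * t - 3 * a3 * s) := by
  linear_combination (-8 * (a1 + 2 * s) * (a1 * s ^ 2 + a1 ^ 2 * s)) * hu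

theorem stmt2_general {R : Type*} [CommRing R] (u3 : R) (h3 : 3 * u3 = 1)
    (a1 a3 s t b1 b3 r1 : MvPolynomial (Fin 4) R)
    (hb1 : b1 = a1 + 2 * s)
    (hb3 : b3 = a3 + C u3 * a1 * s ^ 2 + C u3 * a1 ^ 2 * s + 2 * t)
    (hr1 : r1 = s ^ 4 - 6 * s * t + a1 * s ^ 3 - 3 * a1 * t - 3 * a3 * s) :
    b1 ^ 4 - 24 * b1 * b3 = (a1 ^ 4 - 24 * a1 * a3) + 16 * r1 := by
  have hC : 3 * C u3 = (1 : MvPolynomial (Fin 4) R) := by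
    rw [← map_ofNat C 3, ← map_mul, h3, map_one]
  subst hb1 hb3 hr1
  exact c4_rightUnit_eq hC a1 a3 s t

/-- In `ℤ[1/3][a₁, a₃, s, t]` (formalized as a polynomial ring over any commutative ring `R`
in which `3` is invertible), with `b₁ = η_R(a₁) = a₁ + 2s`,
`b₃ = η_R(a₃) = a₃ + (1/3)a₁s² + (1/3)a₁²s + 2t`, and
`r₁ = s⁴ − 6st + a₁s³ − 3a₁t − 3a₃s`, one has the polynomial identity
`b₁⁴ − 24·b₁·b₃ = (a₁⁴ − 24·a₁·a₃) + 16·r₁`; in particular `c₄` is invariant under the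
right unit of the 2-primary cubic Hopf algebroid modulo the relation ideal. -/
theorem stmt2 {R : Type*} [CommRing R] (u3 : R) (h3 : 3 * u3 = 1)
    (a1 a3 s t b1 b3 r1 : MvPolynomial (Fin 4) R)
    (ha1 : a1 = X 0) (ha3 : a3 = X 1) (hs : s = X 2) (ht : t = X 3)
    (hb1 : b1 = a1 + 2 * s)
    (hb3 : b3 = a3 + C u3 * a1 * s ^ 2 + C u3 * a1 ^ 2 * s + 2 * t)
    (hr1 : r1 = s ^ 4 - 6 * s * t + a1 * s ^ 3 - 3 * a1 * t - 3 * a3 * s) :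
    b1 ^ 4 - 24 * b1 * b3 = (a1 ^ 4 - 24 * a1 * a3) + 16 * r1 :=
  stmt2_general u3 h3 a1 a3 s t b1 b3 r1 hb1 hb3 hr1
end

section
/- In the polynomial ring ℤ[1/3][a₁, a₃, s, t], let b₁ = a₁ + 2s, b₃ = a₃ + (1/3)a₁s² + (1/3)a₁²s + 2t, and set r₁ = s⁴ − 6st + a₁s³ − 3a₁t − 3a₃s and r₂ = s⁶ − 27t² + 3a₁s⁵ − 9a₁s²t + 3a₁²s⁴ − 9a₁²st + a₁³s³ − 27a₃t. Then the element (−b₁⁶ + 36b₁³b₃ − 216b₃²) − (−a₁⁶ + 36a₁³a₃ − 216a₃²) lies in the ideal generated by r₁ and r₂; that is, the modular form c₆ is invariant under the right unit η_R of the 2-primary cubic Hopf algebroid. -/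
open MvPolynomial

/-- In `ℤ[1/3][a₁, a₃, s, t]` (formalized over any commutative ring `R` in which `3` is
invertible), with `b₁ = a₁ + 2s`, `b₃ = a₃ + (1/3)a₁s² + (1/3)a₁²s + 2t`, and the relations
`r₁ = s⁴ − 6st + a₁s³ − 3a₁t − 3a₃s` and
`r₂ = s⁶ − 27t² + 3a₁s⁵ − 9a₁s²t + 3a₁²s⁴ − 9a₁²st + a₁³s³ − 27a₃t`, the element
`(−b₁⁶ + 36b₁³b₃ − 216b₃²) − (−a₁⁶ + 36a₁³a₃ − 216a₃²)` lies in the ideal `(r₁, r₂)`;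
i.e. `c₆` is invariant under the right unit of the 2-primary cubic Hopf algebroid. -/
theorem stmt3 {R : Type*} [CommRing R] (u3 : R) (h3 : 3 * u3 = 1)
    (a1 a3 s t b1 b3 r1 r2 : MvPolynomial (Fin 4) R)
    (ha1 : a1 = X 0) (ha3 : a3 = X 1) (hs : s = X 2) (ht : t = X 3)
    (hb1 : b1 = a1 + 2 * s)
    (hb3 : b3 = a3 + C u3 * a1 * s ^ 2 + C u3 * a1 ^ 2 * s + 2 * t)
    (hr1 : r1 = s ^ 4 - 6 * s * t + a1 * s ^ 3 - 3 * a1 * t - 3 * a3 * s)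
    (hr2 : r2 = s ^ 6 - 27 * t ^ 2 + 3 * a1 * s ^ 5 - 9 * a1 * s ^ 2 * t
      + 3 * a1 ^ 2 * s ^ 4 - 9 * a1 ^ 2 * s * t + a1 ^ 3 * s ^ 3 - 27 * a3 * t) :
    (-b1 ^ 6 + 36 * b1 ^ 3 * b3 - 216 * b3 ^ 2)
      - (-a1 ^ 6 + 36 * a1 ^ 3 * a3 - 216 * a3 ^ 2) ∈ Ideal.span {r1, r2} := by
  have hC : (3 : MvPolynomial (Fin 4) R) * C u3 = 1 := by
    rw [← C_1, ← h3, map_mul, map_ofNat]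
  rw [Ideal.mem_span_pair]
  refine ⟨-96 * s ^ 2 - 96 * a1 * s - 24 * a1 ^ 2, 32, ?_⟩
  subst hb1 hb3 hr1 hr2
  linear_combination (-((-288:MvPolynomial (Fin 4) R) * a1 * s ^ 2 * t
      + 96 * a1 * s ^ 5 - 144 * a1 * a3 * s ^ 2 - 288 * a1 ^ 2 * s * t
      + 216 * a1 ^ 2 * s ^ 4 - 72 * a1 ^ 2 * s ^ 4 * C u3 - 144 * a1 ^ 2 * a3 * s
      + 168 * a1 ^ 3 * s ^ 3 - 144 * a1 ^ 3 * s ^ 3 * C u3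
      + 60 * a1 ^ 4 * s ^ 2 - 72 * a1 ^ 4 * s ^ 2 * C u3 + 12 * a1 ^ 5 * s)) * hC
end

section
/- In the polynomial ring ℤ[1/3][a₁, a₃, s, t], let b₁ = a₁ + 2s, b₃ = a₃ + (1/3)a₁s² + (1/3)a₁²s + 2t, and set r₁ = s⁴ − 6st + a₁s³ − 3a₁t − 3a₃s and r₂ = s⁶ − 27t² + 3a₁s⁵ − 9a₁s²t + 3a₁²s⁴ − 9a₁²st + a₁³s³ − 27a₃t. Then the element b₃³·(b₁³ − 27·b₃) − a₃³·(a₁³ − 27·a₃) lies in the ideal generated by r₁ and r₂; that is, the discriminant Δ = a₃³(a₁³ − 27a₃) is invariant under the right unit η_R of the 2-primary cubic Hopf algebroid. -/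
open MvPolynomial

set_option maxHeartbeats 4000000 in
/-- In `ℤ[1/3][a₁, a₃, s, t]` (formalized over any commutative ring `R` in which `3` is
invertible), with `b₁ = a₁ + 2s`, `b₃ = a₃ + (1/3)a₁s² + (1/3)a₁²s + 2t`, and the relations
`r₁`, `r₂` of the 2-primary cubic Hopf algebroid, the element
`b₃³(b₁³ − 27b₃) − a₃³(a₁³ − 27a₃)` lies in the ideal `(r₁, r₂)`;
i.e. the discriminant `Δ = a₃³(a₁³ − 27a₃)` is invariant under the right unit. -/
theorem stmt4 {R : Type*} [CommRing R] (u3 : R) (h3 : 3 * u3 = 1)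
    (a1 a3 s t b1 b3 r1 r2 : MvPolynomial (Fin 4) R)
    (ha1 : a1 = X 0) (ha3 : a3 = X 1) (hs : s = X 2) (ht : t = X 3)
    (hb1 : b1 = a1 + 2 * s)
    (hb3 : b3 = a3 + C u3 * a1 * s ^ 2 + C u3 * a1 ^ 2 * s + 2 * t)
    (hr1 : r1 = s ^ 4 - 6 * s * t + a1 * s ^ 3 - 3 * a1 * t - 3 * a3 * s)
    (hr2 : r2 = s ^ 6 - 27 * t ^ 2 + 3 * a1 * s ^ 5 - 9 * a1 * s ^ 2 * t
      + 3 * a1 ^ 2 * s ^ 4 - 9 * a1 ^ 2 * s * t + a1 ^ 3 * s ^ 3 - 27 * a3 * t) :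
    b3 ^ 3 * (b1 ^ 3 - 27 * b3) - a3 ^ 3 * (a1 ^ 3 - 27 * a3) ∈ Ideal.span {r1, r2} := by
  have hC : (3 : MvPolynomial (Fin 4) R) * C u3 = 1 := by
    rw [← C_1, ← h3, C_mul, map_ofNat]
  refine Ideal.mem_span_pair.mpr
    ⟨(10:MvPolynomial (Fin 4) R) * a1 ^ 2 * a3 ^ 2 + (-1:MvPolynomial (Fin 4) R) * C u3 ^ 1 * a1 ^ 5 * a3 + (24:MvPolynomial (Fin 4) R) * t * a1 ^ 2 * a3 + (-1:MvPolynomial (Fin 4) R) * C u3 ^ 1 * t * a1 ^ 5 + (40:MvPolynomial (Fin 4) R) * C u3 ^ 1 * t ^ 2 * a1 ^ 2 + (8:MvPolynomial (Fin 4) R) * s * a1 * a3 ^ 2 + (11:MvPolynomial (Fin 4) R) * C u3 ^ 1 * s * a1 ^ 4 * a3 + (-1:MvPolynomial (Fin 4) R) * C u3 ^ 2 * s * a1 ^ 7 + (128:MvPolynomial (Fin 4) R) * C u3 ^ 1 * s * t * a1 * a3 + (14:MvPolynomial (Fin 4) R) * C u3 ^ 1 * s * t * a1 ^ 4 + (64:MvPolynomial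 (Fin 4) R) * C u3 ^ 1 * s * t ^ 2 * a1 + (-8:MvPolynomial (Fin 4) R) * C u3 ^ 1 * s ^ 2 * a3 ^ 2 + (12:MvPolynomial (Fin 4) R) * s ^ 2 * a1 ^ 3 * a3 + (-1:MvPolynomial (Fin 4) R) * C u3 ^ 2 * s ^ 2 * a1 ^ 6 + (16:MvPolynomial (Fin 4) R) * C u3 ^ 1 * s ^ 2 * t * a3 + (16:MvPolynomial (Fin 4) R) * s ^ 2 * t * a1 ^ 3 + (16:MvPolynomial (Fin 4) R) * C u3 ^ 1 * s ^ 2 * t ^ 2 + (40:MvPolynomial (Fin 4) R) * C u3 ^ 1 * s ^ 3 * a1 ^ 2 * a3 + (11:MvPolynomial (Fin 4) R) * C u3 ^ 3 * s ^ 3 * a1 ^ 5 + (160:MvPolynomial (Fin 4) R) * C u3 ^ 2 * s ^ 3 * t * a1 ^ 2 + (64:MvPolynomial (Fin 4) R) * C u3 ^ 2 * s ^ 4 * a1 * a3 + (19:MvPolynomial (Fin 4) R) * C u3 ^ 3 * s ^ 4 * a1 ^ 4 + (32:MvPolynomial (Fin 4) R) * C u3 ^ 1 * s ^ 4 * t *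 a1 + (16:MvPolynomial (Fin 4) R) * C u3 ^ 2 * s ^ 5 * a3 + (8:MvPolynomial (Fin 4) R) * C u3 ^ 3 * s ^ 5 * a1 ^ 3 + (32:MvPolynomial (Fin 4) R) * C u3 ^ 2 * s ^ 5 * t,
     (8:MvPolynomial (Fin 4) R) * a3 ^ 2 + (-4:MvPolynomial (Fin 4) R) * C u3 ^ 1 * a1 ^ 3 * a3 + (1:MvPolynomial (Fin 4) R) * C u3 ^ 3 * a1 ^ 6 + (16:MvPolynomial (Fin 4) R) * t * a3 + (-16:MvPolynomial (Fin 4) R) * C u3 ^ 2 * t * a1 ^ 3 + (16:MvPolynomial (Fin 4) R) * t ^ 2 + (-16:MvPolynomial (Fin 4) R) * C u3 ^ 2 * s * a1 ^ 2 * a3 + (-16:MvPolynomial (Fin 4) R) * C u3 ^ 2 * s * t * a1 ^ 2 + (-32:MvPolynomial (Fin 4) R) * C u3 ^ 2 * s ^ 2 * a1 * a3 + (-32:MvPolynomial (Fin 4) R) * C u3 ^ 2 * s ^ 2 * t * a1 + (-16:MvPolynomial (Fin 4) R) * C u3 ^ 2 * s ^ 3 * a3 + (-32:MvPolynomial (Fin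 4) R) * C u3 ^ 2 * s ^ 3 * t, ?_⟩
  subst hb1 hb3 hr1 hr2
  linear_combination (-1 : MvPolynomial (Fin 4) R) * ((-36:MvPolynomial (Fin 4) R) * t * a1 ^ 3 * a3 ^ 2 + (3:MvPolynomial (Fin 4) R) * t * a1 ^ 6 * a3 * C u3 + (9:MvPolynomial (Fin 4) R) * t * a1 ^ 6 * a3 * C u3 ^ 2 + (-84:MvPolynomial (Fin 4) R) * t ^ 2 * a1 ^ 3 * a3 + (-144:MvPolynomial (Fin 4) R) * t ^ 2 * a1 ^ 3 * a3 * C u3 + (3:MvPolynomial (Fin 4) R) * t ^ 2 * a1 ^ 6 * C u3 + (9:MvPolynomial (Fin 4) R) * t ^ 2 * a1 ^ 6 * C u3 ^ 2 + (-8:MvPolynomial (Fin 4) R) * t ^ 3 * a1 ^ 3 + (-144:MvPolynomial (Fin 4) R) * t ^ 3 * a1 ^ 3 * C u3 + (-36:MvPolynomial (Fin 4) R) * s * a1 ^ 2 * a3 ^ 3 + (-264:MvPolynomial (Fin 4) R) * s * t * a1 ^ 2 * a3 ^ 2 + (-144:MvPolynomial (Fin 4) R) * s * t * a1 ^ 2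 * a3 ^ 2 * C u3 + (3:MvPolynomial (Fin 4) R) * s * t * a1 ^ 8 * C u3 ^ 2 + (-360:MvPolynomial (Fin 4) R) * s * t ^ 2 * a1 ^ 2 * a3 + (-288:MvPolynomial (Fin 4) R) * s * t ^ 2 * a1 ^ 2 * a3 * C u3 + (-48:MvPolynomial (Fin 4) R) * s * t ^ 2 * a1 ^ 5 * C u3 + (-192:MvPolynomial (Fin 4) R) * s * t ^ 3 * a1 ^ 2 + (-144:MvPolynomial (Fin 4) R) * s * t ^ 3 * a1 ^ 2 * C u3 + (-36:MvPolynomial (Fin 4) R) * s ^ 2 * a1 * a3 ^ 3 + (-54:MvPolynomial (Fin 4) R) * s ^ 2 * a1 ^ 4 * a3 ^ 2 * C u3 + (-192:MvPolynomial (Fin 4) R) * s ^ 2 * t * a1 * a3 ^ 2 + (-288:MvPolynomial (Fin 4) R) * s ^ 2 * t * a1 * a3 ^ 2 * C u3 + (-36:MvPolynomial (Fin 4) R) * s ^ 2 * t * a1 ^ 4 * a3 + (-264:MvPolynomial (Fin 4) R) * s ^ 2 * t * a1 ^ 4 * a3 * C u3 + (3:MvPolynomial (Fin 4) R) * s ^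 2 * t * a1 ^ 7 * C u3 ^ 2 + (-288:MvPolynomial (Fin 4) R) * s ^ 2 * t ^ 2 * a1 * a3 + (-576:MvPolynomial (Fin 4) R) * s ^ 2 * t ^ 2 * a1 * a3 * C u3 + (-48:MvPolynomial (Fin 4) R) * s ^ 2 * t ^ 2 * a1 ^ 4 + (-312:MvPolynomial (Fin 4) R) * s ^ 2 * t ^ 2 * a1 ^ 4 * C u3 + (-240:MvPolynomial (Fin 4) R) * s ^ 2 * t ^ 3 * a1 + (-288:MvPolynomial (Fin 4) R) * s ^ 2 * t ^ 3 * a1 * C u3 + (-8:MvPolynomial (Fin 4) R) * s ^ 3 * a3 ^ 3 + (-18:MvPolynomial (Fin 4) R) * s ^ 3 * a1 ^ 3 * a3 ^ 2 + (-108:MvPolynomial (Fin 4) R) * s ^ 3 * a1 ^ 3 * a3 ^ 2 * C u3 + (-5:MvPolynomial (Fin 4) R) * s ^ 3 * a1 ^ 6 * a3 * C u3 + (-36:MvPolynomial (Fin 4) R) * s ^ 3 * a1 ^ 6 * a3 * C u3 ^ 2 + (-48:MvPolynomial (Fin 4) R) * s ^ 3 * t * a3 ^ 2 + (-144:MvPolynomial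 (Fin 4) R) * s ^ 3 * t * a3 ^ 2 * C u3 + (-80:MvPolynomial (Fin 4) R) * s ^ 3 * t * a1 ^ 3 * a3 + (-576:MvPolynomial (Fin 4) R) * s ^ 3 * t * a1 ^ 3 * a3 * C u3 + (-1:MvPolynomial (Fin 4) R) * s ^ 3 * t * a1 ^ 6 * C u3 + (-61:MvPolynomial (Fin 4) R) * s ^ 3 * t * a1 ^ 6 * C u3 ^ 2 + (-96:MvPolynomial (Fin 4) R) * s ^ 3 * t ^ 2 * a3 + (-432:MvPolynomial (Fin 4) R) * s ^ 3 * t ^ 2 * a3 * C u3 + (-80:MvPolynomial (Fin 4) R) * s ^ 3 * t ^ 2 * a1 ^ 3 + (-416:MvPolynomial (Fin 4) R) * s ^ 3 * t ^ 2 * a1 ^ 3 * C u3 + (-64:MvPolynomial (Fin 4) R) * s ^ 3 * t ^ 3 + (-288:MvPolynomial (Fin 4) R) * s ^ 3 * t ^ 3 * C u3 + (42:MvPolynomial (Fin 4) R) * s ^ 4 * a1 ^ 2 * a3 ^ 2 + (-54:MvPolynomial (Fin 4) R) * s ^ 4 * a1 ^ 2 * a3 ^ 2 * C u3 + (-2:MvPolynomial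 (Fin 4) R) * s ^ 4 * a1 ^ 5 * a3 * C u3 + (-97:MvPolynomial (Fin 4) R) * s ^ 4 * a1 ^ 5 * a3 * C u3 ^ 2 + (-1:MvPolynomial (Fin 4) R) * s ^ 4 * a1 ^ 8 * C u3 ^ 2 + (-9:MvPolynomial (Fin 4) R) * s ^ 4 * a1 ^ 8 * C u3 ^ 3 + (72:MvPolynomial (Fin 4) R) * s ^ 4 * t * a1 ^ 2 * a3 + (-136:MvPolynomial (Fin 4) R) * s ^ 4 * t * a1 ^ 2 * a3 * C u3 + (13:MvPolynomial (Fin 4) R) * s ^ 4 * t * a1 ^ 5 * C u3 + (-175:MvPolynomial (Fin 4) R) * s ^ 4 * t * a1 ^ 5 * C u3 ^ 2 + (48:MvPolynomial (Fin 4) R) * s ^ 4 * t ^ 2 * a1 ^ 2 + (-88:MvPolynomial (Fin 4) R) * s ^ 4 * t ^ 2 * a1 ^ 2 * C u3 + (32:MvPolynomial (Fin 4) R) * s ^ 5 * a1 * a3 ^ 2 + (64:MvPolynomial (Fin 4) R) * s ^ 5 * a1 * a3 ^ 2 * C u3 + (12:MvPolynomial (Fin 4) R) * s ^ 5 * a1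 ^ 4 * a3 + (35:MvPolynomial (Fin 4) R) * s ^ 5 * a1 ^ 4 * a3 * C u3 + (-89:MvPolynomial (Fin 4) R) * s ^ 5 * a1 ^ 4 * a3 * C u3 ^ 2 + (-2:MvPolynomial (Fin 4) R) * s ^ 5 * a1 ^ 7 * C u3 ^ 2 + (-36:MvPolynomial (Fin 4) R) * s ^ 5 * a1 ^ 7 * C u3 ^ 3 + (48:MvPolynomial (Fin 4) R) * s ^ 5 * t * a1 * a3 + (96:MvPolynomial (Fin 4) R) * s ^ 5 * t * a1 * a3 * C u3 + (16:MvPolynomial (Fin 4) R) * s ^ 5 * t * a1 ^ 4 + (62:MvPolynomial (Fin 4) R) * s ^ 5 * t * a1 ^ 4 * C u3 + (-170:MvPolynomial (Fin 4) R) * s ^ 5 * t * a1 ^ 4 * C u3 ^ 2 + (48:MvPolynomial (Fin 4) R) * s ^ 5 * t ^ 2 * a1 + (-64:MvPolynomial (Fin 4) R) * s ^ 5 * t ^ 2 * a1 * C u3 + (8:MvPolynomial (Fin 4) R) * s ^ 6 * a3 ^ 2 + (16:MvPolynomial (Fin 4) R) * s ^ 6 * a3 ^ 2 * C u3 + (12:MvPolynomial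 (Fin 4) R) * s ^ 6 * a1 ^ 3 * a3 + (72:MvPolynomial (Fin 4) R) * s ^ 6 * a1 ^ 3 * a3 * C u3 + (-28:MvPolynomial (Fin 4) R) * s ^ 6 * a1 ^ 3 * a3 * C u3 ^ 2 + (-1:MvPolynomial (Fin 4) R) * s ^ 6 * a1 ^ 6 * C u3 ^ 2 + (-54:MvPolynomial (Fin 4) R) * s ^ 6 * a1 ^ 6 * C u3 ^ 3 + (16:MvPolynomial (Fin 4) R) * s ^ 6 * t * a3 + (64:MvPolynomial (Fin 4) R) * s ^ 6 * t * a3 * C u3 + (16:MvPolynomial (Fin 4) R) * s ^ 6 * t * a1 ^ 3 + (48:MvPolynomial (Fin 4) R) * s ^ 6 * t * a1 ^ 3 * C u3 + (-56:MvPolynomial (Fin 4) R) * s ^ 6 * t * a1 ^ 3 * C u3 ^ 2 + (16:MvPolynomial (Fin 4) R) * s ^ 6 * t ^ 2 + (64:MvPolynomial (Fin 4) R) * s ^ 6 * t ^ 2 * C u3 + (40:MvPolynomial (Fin 4) R) * s ^ 7 * a1 ^ 2 * a3 * C u3 + (-36:MvPolynomial (Fin 4) R) * s ^ 7 * a1 ^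 5 * C u3 ^ 3 + (32:MvPolynomial (Fin 4) R) * s ^ 7 * t * a1 ^ 2 * C u3 + (-9:MvPolynomial (Fin 4) R) * s ^ 8 * a1 ^ 4 * C u3 ^ 3 + (32:MvPolynomial (Fin 4) R) * s ^ 8 * t * a1 * C u3) * hC
end

section
/- Define an ℤ[1/3][a₁,a₃]-linear map Tr on the free module with basis {1, s, s², s³, t, st, s²t, s³t} by Tr(1) = 8, Tr(s) = −4a₁, Tr(s²) = 2a₁², Tr(s³) = −a₁³, Tr(t) = (1/3)a₁³ − 4a₃, Tr(st) = −2a₁a₃, Tr(s²t) = −(1/3)a₁⁵ + 9a₁²a₃, Tr(s³t) = (1/3)a₁⁶ − 7a₁³a₃ − 27a₃². Then the element 3·(a₁ + 2s)·(a₃ + (1/3)a₁s² + (1/3)a₁²s + 2t), which when expanded equals 3a₁a₃·1 + (a₁³ + 6a₃)·s + 3a₁²·s² + 2a₁·s³ + 6a₁·t + 12·st, has trace Tr equal to 2·(a₁⁴ − 24a₁a₃) = 2c₄. -/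
open MvPolynomial

theorem ofNat_mul_map_eq_one {R A : Type*} [NonAssocSemiring R] [NonAssocSemiring A]
    (f : R →+* A) (n : ℕ) [n.AtLeastTwo] {u : R} (h : (OfNat.ofNat n : R) * u = 1) :
    (OfNat.ofNat n : A) * f u = 1 := by
  rw [← map_ofNat f n, ← map_mul, h, map_one]

/-- The second conjunct is `Tr` applied term by term to the expansion in the first. -/
theorem stmt5_general {R : Type*} [CommRing R] (u3 : R) (h3 : 3 * u3 = 1)
    (a1 a3 : MvPolynomial (Fin 2) R)
    (s t : MvPolynomial (Fin 2) (MvPolynomial (Fin 2) R)) :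
    (3 * (C a1 + 2 * s) * (C a3 + C (C u3 * a1) * s ^ 2 + C (C u3 * a1 ^ 2) * s + 2 * t)
      = C (3 * a1 * a3) * 1 + C (a1 ^ 3 + 6 * a3) * s + C (3 * a1 ^ 2) * s ^ 2
        + C (2 * a1) * s ^ 3 + C (6 * a1) * t + C 12 * (s * t)) ∧
    ((3 * a1 * a3) * 8 + (a1 ^ 3 + 6 * a3) * (-(4 * a1)) + (3 * a1 ^ 2) * (2 * a1 ^ 2)
        + (2 * a1) * (-(a1 ^ 3)) + (6 * a1) * (C u3 * a1 ^ 3 - 4 * a3)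
        + 12 * (-(2 * a1 * a3))
      = 2 * (a1 ^ 4 - 24 * a1 * a3)) := by
  have h3A : (3 : MvPolynomial (Fin 2) R) * C u3 = 1 := ofNat_mul_map_eq_one C 3 h3
  have h3Γ : (3 : MvPolynomial (Fin 2) (MvPolynomial (Fin 2) R)) * C (C u3) = 1 :=
    ofNat_mul_map_eq_one (C.comp C) 3 h3
  constructor
  · simp only [C_mul, C_add, C_pow, map_ofNat]
    linear_combination (C a1 ^ 3 * s + 3 * C a1 ^ 2 * s ^ 2 + 2 * C a1 * s ^ 3) * h3Γ
  · linear_combination 2 * a1 ^ 4 * h3A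

/-- The transfer computation `Tr(3·η_R(a₁a₃)) = 2c₄` for the 2-primary cubic Hopf algebroid.
Here `A = R[a₁,a₃]` (with `3` invertible in `R`), `Γ' = A[s,t]/(r₁,r₂)` is free on the basis
`{1, s, s², s³, t, st, s²t, s³t}`, and `Tr` is the `A`-linear map with
`Tr(1) = 8`, `Tr(s) = −4a₁`, `Tr(s²) = 2a₁²`, `Tr(s³) = −a₁³`, `Tr(t) = (1/3)a₁³ − 4a₃`,
`Tr(st) = −2a₁a₃`, `Tr(s²t) = −(1/3)a₁⁵ + 9a₁²a₃`, `Tr(s³t) = (1/3)a₁⁶ − 7a₁³a₃ − 27a₃²`.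
First conjunct: the expansion of `3·(a₁+2s)·(a₃+(1/3)a₁s²+(1/3)a₁²s+2t)` in the basis;
second conjunct: the corresponding `A`-linear combination of trace values equals
`2·(a₁⁴ − 24a₁a₃) = 2c₄`. -/
theorem stmt5 {R : Type*} [CommRing R] (u3 : R) (h3 : 3 * u3 = 1)
    (a1 a3 : MvPolynomial (Fin 2) R) (ha1 : a1 = X 0) (ha3 : a3 = X 1)
    (s t : MvPolynomial (Fin 2) (MvPolynomial (Fin 2) R)) (hs : s = X 0) (ht : t = X 1) :
    (3 * (C a1 + 2 * s) * (C a3 + C (C u3 * a1) * s ^ 2 + C (C u3 * a1 ^ 2) * s + 2 * t)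
      = C (3 * a1 * a3) * 1 + C (a1 ^ 3 + 6 * a3) * s + C (3 * a1 ^ 2) * s ^ 2
        + C (2 * a1) * s ^ 3 + C (6 * a1) * t + C 12 * (s * t)) ∧
    ((3 * a1 * a3) * 8 + (a1 ^ 3 + 6 * a3) * (-(4 * a1)) + (3 * a1 ^ 2) * (2 * a1 ^ 2)
        + (2 * a1) * (-(a1 ^ 3)) + (6 * a1) * (C u3 * a1 ^ 3 - 4 * a3)
        + 12 * (-(2 * a1 * a3))
      = 2 * (a1 ^ 4 - 24 * a1 * a3)) :=
  stmt5_general u3 h3 a1 a3 s t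
end

section
/- Let A = ℤ[1/6][a₁, a₃] and let Γ = A[s,t]/(r₁, r₂) where r₁ = s⁴ − 6st + a₁s³ − 3a₁t − 3a₃s and r₂ = s⁶ − 27t² + 3a₁s⁵ − 9a₁s²t + 3a₁²s⁴ − 9a₁²st + a₁³s³ − 27a₃t. Assume Γ is a free A-module with basis the images of {1, s, s², s³, t, st, s²t, s³t}. Then the A-linear endomorphism of Γ given by multiplication by s has trace −4·a₁. -/
/-!
For `i ≠ 3, 7` multiplication by `s` sends the basis vector `bᵢ` to `bᵢ₊₁`, so it contributes
nothing to the diagonal. The two remaining columns come from reducing `s⁴` modulo `r₁`, whose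
`s³`-coefficient is `-a₁`, and `s⁴t` modulo `(r₁, r₂)`, whose `s³t`-coefficient is `-3a₁`
(here `3 (s⁴t - ρ)` is an explicit combination of `r₁` and `r₂`, and `3` is cancelled).
Hence the trace is `-a₁ - 3a₁ = -4a₁`.
-/

open MvPolynomial

noncomputable section

variable (R : Type*) [CommRing R]

/-- `A = R[a₁, a₃]`, with `a₁ = X 0` and `a₃ = X 1`. -/
abbrev CubicA := MvPolynomial (Fin 2) R

/-- `P = A[s, t]`, with `s = X 0` and `t = X 1`. -/
abbrev CubicP := MvPolynomial (Fin 2) (CubicA R)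

def cubicA1 : CubicA R := X 0

def cubicA3 : CubicA R := X 1

def cubicS : CubicP R := X 0

def cubicT : CubicP R := X 1

/-- The first relation `r₁ = s⁴ − 6st + a₁s³ − 3a₁t − 3a₃s`. -/
def cubicR1 : CubicP R :=
  cubicS R ^ 4 - 6 * cubicS R * cubicT R + C (cubicA1 R) * cubicS R ^ 3
    - 3 * C (cubicA1 R) * cubicT R - 3 * C (cubicA3 R) * cubicS R

/-- The second relation
`r₂ = s⁶ − 27t² + 3a₁s⁵ − 9a₁s²t + 3a₁²s⁴ − 9a₁²st + a₁³s³ − 27a₃t`. -/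
def cubicR2 : CubicP R :=
  cubicS R ^ 6 - 27 * cubicT R ^ 2 + 3 * C (cubicA1 R) * cubicS R ^ 5
    - 9 * C (cubicA1 R) * cubicS R ^ 2 * cubicT R + 3 * C (cubicA1 R) ^ 2 * cubicS R ^ 4
    - 9 * C (cubicA1 R) ^ 2 * cubicS R * cubicT R + C (cubicA1 R) ^ 3 * cubicS R ^ 3
    - 27 * C (cubicA3 R) * cubicT R

/-- `Γ = A[s,t]/(r₁, r₂)`. -/
abbrev CubicGamma := CubicP R ⧸ Ideal.span {cubicR1 R, cubicR2 R}

/-- The images of `{1, s, s², s³, t, st, s²t, s³t}`. -/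
def cubicBasisElems : Fin 8 → CubicP R :=
  ![1, cubicS R, cubicS R ^ 2, cubicS R ^ 3, cubicT R, cubicS R * cubicT R,
    cubicS R ^ 2 * cubicT R, cubicS R ^ 3 * cubicT R]

theorem LinearMap.trace_eq_sum_repr_apply {A M ι : Type*} [CommRing A] [AddCommGroup M]
    [Module A M] [Fintype ι] [DecidableEq ι] (b : Module.Basis ι A M) (f : M →ₗ[A] M) :
    LinearMap.trace A M f = ∑ i, b.repr (f (b i)) i := by
  simp only [LinearMap.trace_eq_matrix_trace A b, Matrix.trace, Matrix.diag,
    LinearMap.toMatrix_apply]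

theorem Ideal.Quotient.mk_eq_mk_of_isUnit_mul_sub_mem {S : Type*} [CommRing S] {J : Ideal S}
    {c x y : S} (hc : IsUnit c) (h : c * (x - y) ∈ J) :
    Ideal.Quotient.mk J x = Ideal.Quotient.mk J y :=
  Ideal.Quotient.eq.mpr ((J.unit_mul_mem_iff_mem hc).mp h)

theorem MvPolynomial.smul_mk_eq_mk_C_mul {σ A : Type*} [CommRing A] {J : Ideal (MvPolynomial σ A)}
    (c : A) (x : MvPolynomial σ A) :
    c • Ideal.Quotient.mk J x = Ideal.Quotient.mk J (C c * x) := by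
  rw [← smul_eq_C_mul]; rfl

section CubicGamma

variable {R}

local notation "𝓘" => Ideal.span {cubicR1 R, cubicR2 R}

local notation "s" => cubicS R

local notation "t" => cubicT R

local notation "a₁" => C (cubicA1 R)

local notation "a₃" => C (cubicA3 R)

theorem cubicS_mul_cubicBasisElems {i : Fin 8} (hi₃ : i ≠ 3) (hi₇ : i ≠ 7) :
    s * cubicBasisElems R i = cubicBasisElems R (i + 1) := by
  fin_cases i <;> simp_all [cubicBasisElems] <;> ring

theorem cubicS_pow_four_sub_mem :
    s ^ 4 - (6 * s * t - a₁ * s ^ 3 + 3 * a₁ * t + 3 * a₃ * s) ∈ 𝓘 :=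
  Ideal.mem_span_pair.mpr ⟨1, 0, by rw [cubicR1]; ring⟩

theorem three_mul_cubicS_pow_four_mul_cubicT_sub_mem :
    3 * (s ^ 4 * t - ((3 * a₁ * a₃ - a₁ ^ 4) * t - (6 * a₃ ^ 2 + a₁ ^ 3 * a₃) * s
      - (3 * a₃ + 3 * a₁ ^ 3) * s * t - 4 * a₁ ^ 2 * a₃ * s ^ 2 - 4 * a₁ ^ 2 * s ^ 2 * t
      - 3 * a₁ * a₃ * s ^ 3 - 3 * a₁ * s ^ 3 * t)) ∈ 𝓘 :=
  Ideal.mem_span_pair.mpr ⟨-(6 * a₃ + a₁ ^ 3 + 9 * t + 4 * a₁ ^ 2 * s + 5 * a₁ * s ^ 2 + 2 * s ^ 3),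
    a₁ + 2 * s, by rw [cubicR1, cubicR2]; ring⟩

local notation "μ" => LinearMap.mulLeft (CubicA R) (Ideal.Quotient.mk 𝓘 s)

theorem mulLeft_mk_cubicS_basis_of_ne {b : Module.Basis (Fin 8) (CubicA R) (CubicGamma R)}
    (hb : ∀ i, b i = Ideal.Quotient.mk 𝓘 (cubicBasisElems R i)) {i : Fin 8}
    (hi₃ : i ≠ 3) (hi₇ : i ≠ 7) : μ (b i) = b (i + 1) := by
  rw [hb, hb, LinearMap.mulLeft_apply, ← map_mul, cubicS_mul_cubicBasisElems hi₃ hi₇]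

theorem mulLeft_mk_cubicS_basis_three {b : Module.Basis (Fin 8) (CubicA R) (CubicGamma R)}
    (hb : ∀ i, b i = Ideal.Quotient.mk 𝓘 (cubicBasisElems R i)) :
    μ (b 3) = (6 : CubicA R) • b 5 - cubicA1 R • b 3 + (3 * cubicA1 R) • b 4
      + (3 * cubicA3 R) • b 1 := by
  simp only [hb, LinearMap.mulLeft_apply, smul_mk_eq_mk_C_mul, ← map_mul, ← map_add, ← map_sub]
  refine Ideal.Quotient.eq.mpr (Set.mem_of_eq_of_mem ?_ cubicS_pow_four_sub_mem)
  simp only [cubicBasisElems, Matrix.cons_val, map_mul, map_ofNat]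
  ring

theorem mulLeft_mk_cubicS_basis_seven (h3 : IsUnit (3 : CubicP R))
    {b : Module.Basis (Fin 8) (CubicA R) (CubicGamma R)}
    (hb : ∀ i, b i = Ideal.Quotient.mk 𝓘 (cubicBasisElems R i)) :
    μ (b 7) = (3 * cubicA1 R * cubicA3 R - cubicA1 R ^ 4) • b 4
      - (6 * cubicA3 R ^ 2 + cubicA1 R ^ 3 * cubicA3 R) • b 1
      - (3 * cubicA3 R + 3 * cubicA1 R ^ 3) • b 5 - (4 * cubicA1 R ^ 2 * cubicA3 R) • b 2
      - (4 * cubicA1 R ^ 2) • b 6 - (3 * cubicA1 R * cubicA3 R) • b 3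
      - (3 * cubicA1 R) • b 7 := by
  simp only [hb, LinearMap.mulLeft_apply, smul_mk_eq_mk_C_mul, ← map_mul, ← map_sub]
  refine Ideal.Quotient.mk_eq_mk_of_isUnit_mul_sub_mem h3
    (Set.mem_of_eq_of_mem ?_ three_mul_cubicS_pow_four_mul_cubicT_sub_mem)
  simp only [cubicBasisElems, Matrix.cons_val, map_mul, map_sub, map_add, map_pow, map_ofNat]
  ring

theorem repr_mulLeft_mk_cubicS_basis_self_of_ne
    {b : Module.Basis (Fin 8) (CubicA R) (CubicGamma R)}
    (hb : ∀ i, b i = Ideal.Quotient.mk 𝓘 (cubicBasisElems R i)) {i : Fin 8}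
    (hi₃ : i ≠ 3) (hi₇ : i ≠ 7) : b.repr (μ (b i)) i = 0 := by
  rw [mulLeft_mk_cubicS_basis_of_ne hb hi₃ hi₇, b.repr_self, Finsupp.single_eq_of_ne]
  simp

end CubicGamma

theorem stmt7 (u3 : R) (h3 : 3 * u3 = 1)
    (b : Module.Basis (Fin 8) (CubicA R) (CubicGamma R))
    (hb : ∀ i, b i = Ideal.Quotient.mk (Ideal.span {cubicR1 R, cubicR2 R})
      (cubicBasisElems R i)) :
    LinearMap.trace (CubicA R) (CubicGamma R)
      (LinearMap.mulLeft (CubicA R)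
        (Ideal.Quotient.mk (Ideal.span {cubicR1 R, cubicR2 R}) (cubicS R)))
      = -(4 * cubicA1 R) := by
  have three_isUnit : IsUnit (3 : CubicP R) :=
    map_ofNat (algebraMap R (CubicP R)) 3 ▸ (IsUnit.of_mul_eq_one u3 h3).map _
  rw [LinearMap.trace_eq_sum_repr_apply b, Fintype.sum_eq_add 3 7 (by decide)
      fun i hi => repr_mulLeft_mk_cubicS_basis_self_of_ne hb hi.1 hi.2,
    mulLeft_mk_cubicS_basis_three hb, mulLeft_mk_cubicS_basis_seven three_isUnit hb]
  simp only [map_add, map_sub, map_smul, b.repr_self, Finsupp.add_apply, Finsupp.sub_apply,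
    Finsupp.smul_apply, Finsupp.single_apply, Fin.reduceEq, ↓reduceIte, smul_eq_mul]
  ring

end
end

section
/- Let T be a triangulated category and let a₁ : X₁ → X₀, a₂ : X₂ → X₁, a₃ : X₃ → X₂, a₄ : X₄ → X₃ be morphisms with a₁a₂ = 0, a₂a₃ = 0, a₃a₄ = 0, and suppose 0 ∈ ⟨a₁,a₂,a₃⟩ and 0 ∈ ⟨a₂,a₃,a₄⟩. Then the sets a₁ ∘ ⟨a₂, a₃, a₄⟩ and ⟨a₁, a₂, a₃⟩ ∘ Σa₄ in Hom(ΣX₄, X₀) agree up to a sign: there is a unit ε ∈ {±1} with a₁ ∘ ⟨a₂,a₃,a₄⟩ = ε · (⟨a₁,a₂,a₃⟩ ∘ Σa₄). -/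
open CategoryTheory CategoryTheory.Limits CategoryTheory.Pretriangulated

variable {C : Type*} [Category C] [HasZeroObject C] [HasShift C ℤ] [Preadditive C]
  [∀ n : ℤ, (shiftFunctor C n).Additive] [Pretriangulated C]

/-- The Toda bracket `⟨a₁, a₂, a₃⟩ ⊆ Hom(ΣX₃, X₀)` associated to a cone of `a₂`. -/
def todaBracket {X₀ X₁ X₂ X₃ Cn : C} (a₁ : X₁ ⟶ X₀) (a₂ : X₂ ⟶ X₁) (a₃ : X₃ ⟶ X₂)
    (ι : X₁ ⟶ Cn) (δ : Cn ⟶ X₂⟦(1 : ℤ)⟧) : Set (X₃⟦(1 : ℤ)⟧ ⟶ X₀) :=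
  {f | ∃ (v : X₃⟦(1 : ℤ)⟧ ⟶ Cn) (u : Cn ⟶ X₀),
    v ≫ δ = a₃⟦(1 : ℤ)⟧' ∧ ι ≫ u = a₁ ∧ f = v ≫ u}

/-!
A Toda bracket containing `0` is its indeterminacy `Σa₃ ∘ Hom(ΣX₂, X₀) + Hom(ΣX₃, X₁) ∘ a₁`:
two lifts of `Σa₃` differ by a map factoring through `ι`, and two extensions of `a₁` by a map
factoring through `δ`. Both `a₁ ∘ ⟨a₂, a₃, a₄⟩` and `⟨a₁, a₂, a₃⟩ ∘ Σa₄` are then the set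
`Σa₄ ∘ Hom(ΣX₃, X₁) ∘ a₁`, since `a₁a₂ = 0` and `a₃a₄ = 0` kill the other summand; so the
sign is `ε = 1`.
-/

section Indeterminacy

variable {D : Type*} [Category D] [Preadditive D] [HasShift D ℤ] {X₀ X₁ X₂ X₃ X₄ : D}

def todaIndeterminacy (a₁ : X₁ ⟶ X₀) (a₃ : X₃ ⟶ X₂) : Set (X₃⟦(1 : ℤ)⟧ ⟶ X₀) :=
  {f | ∃ (s : X₂⟦(1 : ℤ)⟧ ⟶ X₀) (t : X₃⟦(1 : ℤ)⟧ ⟶ X₁), a₃⟦(1 : ℤ)⟧' ≫ s + t ≫ a₁ = f}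

theorem image_comp_todaIndeterminacy {a₁ : X₁ ⟶ X₀} {a₂ : X₂ ⟶ X₁} (a₄ : X₄ ⟶ X₃)
    (h12 : a₂ ≫ a₁ = 0) :
    (fun g => g ≫ a₁) '' todaIndeterminacy a₂ a₄ = {f | ∃ t, a₄⟦(1 : ℤ)⟧' ≫ t ≫ a₁ = f} := by
  ext f
  constructor
  · rintro ⟨_, ⟨t, r, rfl⟩, rfl⟩
    exact ⟨t, by simp [h12]⟩
  · rintro ⟨t, rfl⟩
    exact ⟨a₄⟦(1 : ℤ)⟧' ≫ t, ⟨t, 0, by simp⟩, by simp⟩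

theorem image_shift_comp_todaIndeterminacy [(shiftFunctor D (1 : ℤ)).Additive]
    (a₁ : X₁ ⟶ X₀) {a₃ : X₃ ⟶ X₂} {a₄ : X₄ ⟶ X₃} (h34 : a₄ ≫ a₃ = 0) :
    (fun g => a₄⟦(1 : ℤ)⟧' ≫ g) '' todaIndeterminacy a₁ a₃ =
      {f | ∃ t, a₄⟦(1 : ℤ)⟧' ≫ t ≫ a₁ = f} := by
  have h43 : a₄⟦(1 : ℤ)⟧' ≫ a₃⟦(1 : ℤ)⟧' = 0 := by
    rw [← Functor.map_comp, h34, Functor.map_zero]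
  ext f
  constructor
  · rintro ⟨_, ⟨s, t, rfl⟩, rfl⟩
    exact ⟨t, by simp [reassoc_of% h43]⟩
  · rintro ⟨t, rfl⟩
    exact ⟨_, ⟨0, t, by simp⟩, rfl⟩

end Indeterminacy

theorem todaBracket_eq_todaIndeterminacy_of_zero_mem {X₀ X₁ X₂ X₃ Cn : C}
    {a₁ : X₁ ⟶ X₀} {a₂ : X₂ ⟶ X₁} {a₃ : X₃ ⟶ X₂} {ι : X₁ ⟶ Cn} {δ : Cn ⟶ X₂⟦(1 : ℤ)⟧}
    (hT : Triangle.mk a₂ ι δ ∈ distTriang C) (h0 : 0 ∈ todaBracket a₁ a₂ a₃ ι δ) :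
    todaBracket a₁ a₂ a₃ ι δ = todaIndeterminacy a₁ a₃ := by
  obtain ⟨v₀, u₀, hv₀, hu₀, hvu₀⟩ := h0
  have hιδ : ι ≫ δ = 0 := comp_distTriang_mor_zero₂₃ _ hT
  have expand (s : X₂⟦(1 : ℤ)⟧ ⟶ X₀) (t : X₃⟦(1 : ℤ)⟧ ⟶ X₁) :
      (v₀ + t ≫ ι) ≫ (u₀ + δ ≫ s) = a₃⟦(1 : ℤ)⟧' ≫ s + t ≫ a₁ := by
    simp only [Preadditive.add_comp, Preadditive.comp_add, Category.assoc,
      reassoc_of% hιδ, reassoc_of% hv₀, hu₀, ← hvu₀, zero_comp, comp_zero, zero_add, add_zero]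
    exact add_comm _ _
  ext f
  constructor
  · rintro ⟨v, u, hv, hu, rfl⟩
    obtain ⟨t, ht⟩ : ∃ t, v - v₀ = t ≫ ι :=
      Triangle.coyoneda_exact₃ _ hT (v - v₀) (show (v - v₀) ≫ δ = 0 by
        rw [Preadditive.sub_comp, hv, hv₀, sub_self])
    obtain ⟨s, hs⟩ : ∃ s, u - u₀ = δ ≫ s :=
      Triangle.yoneda_exact₃ _ hT (u - u₀) (show ι ≫ (u - u₀) = 0 by
        rw [Preadditive.comp_sub, hu, hu₀, sub_self])
    rw [eq_add_of_sub_eq' ht, eq_add_of_sub_eq' hs]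
    exact ⟨s, t, (expand s t).symm⟩
  · rintro ⟨s, t, rfl⟩
    refine ⟨v₀ + t ≫ ι, u₀ + δ ≫ s, ?_, ?_, (expand s t).symm⟩
    · simp [hv₀, hιδ]
    · simp [hu₀, reassoc_of% hιδ]

theorem stmt12_general {X₀ X₁ X₂ X₃ X₄ Cn Cn' : C}
    (a₁ : X₁ ⟶ X₀) (a₂ : X₂ ⟶ X₁) (a₃ : X₃ ⟶ X₂) (a₄ : X₄ ⟶ X₃)
    (ι : X₁ ⟶ Cn) (δ : Cn ⟶ X₂⟦(1 : ℤ)⟧) (ι' : X₂ ⟶ Cn') (δ' : Cn' ⟶ X₃⟦(1 : ℤ)⟧)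
    (hT : Triangle.mk a₂ ι δ ∈ distTriang C)
    (hT' : Triangle.mk a₃ ι' δ' ∈ distTriang C)
    (h12 : a₂ ≫ a₁ = 0) (h34 : a₄ ≫ a₃ = 0)
    (h0 : (0 : X₃⟦(1 : ℤ)⟧ ⟶ X₀) ∈ todaBracket a₁ a₂ a₃ ι δ)
    (h0' : (0 : X₄⟦(1 : ℤ)⟧ ⟶ X₁) ∈ todaBracket a₂ a₃ a₄ ι' δ') :
    ∃ ε : ℤ, (ε = 1 ∨ ε = -1) ∧
      (fun g => g ≫ a₁) '' todaBracket a₂ a₃ a₄ ι' δ' =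
        (fun g => ε • (a₄⟦(1 : ℤ)⟧' ≫ g)) '' todaBracket a₁ a₂ a₃ ι δ := by
  refine ⟨1, Or.inl rfl, ?_⟩
  simp only [one_smul]
  rw [todaBracket_eq_todaIndeterminacy_of_zero_mem hT' h0',
    todaBracket_eq_todaIndeterminacy_of_zero_mem hT h0,
    image_comp_todaIndeterminacy a₄ h12, image_shift_comp_todaIndeterminacy a₁ h34]

/-- Juggling formula: if `a₁a₂ = a₂a₃ = a₃a₄ = 0`, `0 ∈ ⟨a₁,a₂,a₃⟩` and `0 ∈ ⟨a₂,a₃,a₄⟩`,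
then the subsets `a₁ ∘ ⟨a₂,a₃,a₄⟩` and `⟨a₁,a₂,a₃⟩ ∘ Σa₄` of `Hom(ΣX₄, X₀)` agree up to a
sign `ε ∈ {±1}`. -/
theorem stmt12 {X₀ X₁ X₂ X₃ X₄ Cn Cn' : C}
    (a₁ : X₁ ⟶ X₀) (a₂ : X₂ ⟶ X₁) (a₃ : X₃ ⟶ X₂) (a₄ : X₄ ⟶ X₃)
    (ι : X₁ ⟶ Cn) (δ : Cn ⟶ X₂⟦(1 : ℤ)⟧) (ι' : X₂ ⟶ Cn') (δ' : Cn' ⟶ X₃⟦(1 : ℤ)⟧)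
    (hT : Triangle.mk a₂ ι δ ∈ distTriang C)
    (hT' : Triangle.mk a₃ ι' δ' ∈ distTriang C)
    (h12 : a₂ ≫ a₁ = 0) (h23 : a₃ ≫ a₂ = 0) (h34 : a₄ ≫ a₃ = 0)
    (h0 : (0 : X₃⟦(1 : ℤ)⟧ ⟶ X₀) ∈ todaBracket a₁ a₂ a₃ ι δ)
    (h0' : (0 : X₄⟦(1 : ℤ)⟧ ⟶ X₁) ∈ todaBracket a₂ a₃ a₄ ι' δ') :
    ∃ ε : ℤ, (ε = 1 ∨ ε = -1) ∧
      (fun g => g ≫ a₁) '' todaBracket a₂ a₃ a₄ ι' δ' =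
        (fun g => ε • (a₄⟦(1 : ℤ)⟧' ≫ g)) '' todaBracket a₁ a₂ a₃ ι δ :=
  stmt12_general a₁ a₂ a₃ a₄ ι δ ι' δ' hT hT' h12 h34 h0 h0'
end

section
/- Let C be a symmetric monoidal stable (or tensor-triangulated) category with unit 𝟙, let τ : T → 𝟙 be a morphism from an ⊗-invertible object T, and let R = cofib(τ) with its projection map R → ΣT. If M is an object admitting a unital multiplication by R in the homotopy category (i.e. a left homotopy R-module, so in particular the unit 𝟙 → R induces a map M → R ⊗ M split by an action map R ⊗ M → M), then the map τ ⊗ M : T ⊗ M → M is zero. Consequently there is an isomorphism R ⊗ M ≅ M ⊕ (ΣT ⊗ M). -/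
open CategoryTheory CategoryTheory.Limits CategoryTheory.Pretriangulated
  CategoryTheory.MonoidalCategory

/-!
In the tensored cofiber triangle `T ⊗ M ⟶ M ⟶ R ⊗ M ⟶ Σ(T ⊗ M)` the unit map `M ⟶ R ⊗ M` is split
by the action map, hence a monomorphism, so the preceding map `τ ⊗ M` vanishes. A distinguished
triangle with vanishing first map splits: its rotation has vanishing third map, so its middle
object is the biproduct of the outer ones.
-/

namespace CategoryTheory.Pretriangulated

variable {C : Type*} [Category C] [Preadditive C] [HasZeroObject C] [HasShift C ℤ]
  [∀ n : ℤ, (CategoryTheory.shiftFunctor C n).Additive] [Pretriangulated C]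

lemma Triangle.nonempty_iso_biprod_of_mor₁_eq_zero (T : Triangle C) (hT : T ∈ distTriang C)
    (h : T.mor₁ = 0) : Nonempty (T.obj₃ ≅ T.obj₂ ⊞ T.obj₁⟦(1 : ℤ)⟧) := by
  have hrot := rot_of_distTriang _ hT
  obtain ⟨e, -, -⟩ := exists_iso_binaryBiproduct_of_distTriang _ hrot
    (T.rotate.mor₃_eq_zero_of_epi₂ hrot (T.epi₃ hT h))
  exact ⟨e⟩

end CategoryTheory.Pretriangulated

/-- Let `τ : T → 𝟙` be a map from a `⊗`-invertible object in a tensor-triangulated category,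
with cofiber triangle `T --τ--> 𝟙 --u--> R --δ--> ΣT`.  If `M` carries a unital left homotopy
`R`-module structure `α : R ⊗ M → M` (so that `M → R ⊗ M` induced by the unit is split by
`α`), then `τ ⊗ M : T ⊗ M → M` is zero, and consequently `R ⊗ M ≅ M ⊕ (ΣT ⊗ M)`.
(The compatibility of the tensor with the triangulation is encoded by the hypothesis `hTM`
that the tensored triangle is distinguished.) -/
theorem stmt14 {C : Type*} [Category C] [HasZeroObject C] [HasShift C ℤ] [Preadditive C]
    [∀ n : ℤ, (shiftFunctor C n).Additive] [Pretriangulated C]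
    [MonoidalCategory C] [HasBinaryBiproducts C]
    {T R M : C} (τ : T ⟶ 𝟙_ C) (u : 𝟙_ C ⟶ R) (δ : R ⟶ T⟦(1 : ℤ)⟧)
    (hτ : Triangle.mk τ u δ ∈ distTriang C)
    (hinv : ∃ T' : C, Nonempty (T ⊗ T' ≅ 𝟙_ C))
    (α : R ⊗ M ⟶ M) (hα : (λ_ M).inv ≫ (u ▷ M) ≫ α = 𝟙 M)
    (e : T⟦(1 : ℤ)⟧ ⊗ M ≅ (T ⊗ M)⟦(1 : ℤ)⟧)
    (hTM : Triangle.mk ((τ ▷ M) ≫ (λ_ M).hom) ((λ_ M).inv ≫ (u ▷ M)) ((δ ▷ M) ≫ e.hom)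
      ∈ distTriang C) :
    (τ ▷ M) ≫ (λ_ M).hom = 0 ∧ Nonempty (R ⊗ M ≅ M ⊞ (T⟦(1 : ℤ)⟧ ⊗ M)) := by
  have hunit : Mono ((λ_ M).inv ≫ (u ▷ M)) :=
    (IsSplitMono.mk' ⟨α, by rw [Category.assoc, hα]⟩).mono
  have hτM := Triangle.mor₁_eq_zero_of_mono₂ _ hTM hunit
  obtain ⟨i⟩ := Triangle.nonempty_iso_biprod_of_mor₁_eq_zero _ hTM hτM
  exact ⟨hτM, ⟨i ≪≫ biprod.mapIso (Iso.refl M) e.symm⟩⟩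
end
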